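/- Let X ⊂ ℂ^m be an unbounded pure k-dimensional complex algebraic set, let W ⊂ ℂ^m be an (m−k)-dimensional complex vector subspace with W ∩ C_{3,∞}(X) = {0}, write ℂ^m = V × W with V the orthogonal complement of W and coordinates y = (y₁,…,y_{m−k}) on W, set Wⁱ := {(0,y) ∈ ℂ^m : y_i = 0} and let π_i : ℂ^m → ℂ^{k+1} be the projection π_i(x,y) = (x, y_i). If C_{5,∞}(X) ∩ Wⁱ = {0}, then there exists a sufficiently large R > 0 such that the restriction of π_i to X \ B̄_R is injective, where B̄_R is the closed ball of radius R centered at the origin of ℂ^m. -/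

import Mathlib

open Filter Topology Metric

noncomputable section

/-- `ℂ^m` with its Euclidean (Hermitian) structure. -/
abbrev Em (m : ℕ) := EuclideanSpace ℂ (Fin m)

/-- Evaluation of a multivariate polynomial at a point of `ℂ^m`. -/
def pev {m : ℕ} (f : MvPolynomial (Fin m) ℂ) (x : Em m) : ℂ :=
  MvPolynomial.eval (fun i => x i) f

/-- A (complex, affine) algebraic subset of `ℂ^m`: the common zero locus of a
family of complex polynomials. -/
def IsAlgSet {m : ℕ} (X : Set (Em m)) : Prop :=
  ∃ S : Set (MvPolynomial (Fin m) ℂ), X = {x | ∀ f ∈ S, pev f x = 0}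

/-- An irreducible algebraic subset of `ℂ^m`. -/
def IsIrredAlgSet {m : ℕ} (Z : Set (Em m)) : Prop :=
  IsAlgSet Z ∧ Z.Nonempty ∧
    ∀ Y₁ Y₂ : Set (Em m), IsAlgSet Y₁ → IsAlgSet Y₂ → Z ⊆ Y₁ ∪ Y₂ → Z ⊆ Y₁ ∨ Z ⊆ Y₂

/-- An irreducible component of `X`: a maximal irreducible algebraic subset of `X`. -/
def IsIrredComponent {m : ℕ} (X Z : Set (Em m)) : Prop :=
  IsIrredAlgSet Z ∧ Z ⊆ X ∧ ∀ Z', IsIrredAlgSet Z' → Z' ⊆ X → Z ⊆ Z' → Z = Z'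

/-- The (complex) dimension of an algebraic subset of `ℂ^m`, as the Krull dimension of
the poset of irreducible algebraic subsets contained in it (for complex algebraic
sets this coincides with the complex dimension). -/
def algDim {m : ℕ} (X : Set (Em m)) : WithBot ℕ∞ :=
  Order.krullDim {Z : Set (Em m) // IsIrredAlgSet Z ∧ Z ⊆ X}

/-- `X` is of pure dimension `k`: every irreducible component has dimension `k`. -/
def IsPureDim {m : ℕ} (X : Set (Em m)) (k : ℕ) : Prop :=
  X.Nonempty ∧ ∀ Z, IsIrredComponent X Z → algDim Z = (k : WithBot ℕ∞)

/-- The Zariski tangent space of `X` at `p`: the joint kernel of the differentials at `p`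
of all polynomials vanishing identically on `X`.  At a smooth point of `X` this is the
usual tangent space `T_p X`. -/
def zTangent {m : ℕ} (X : Set (Em m)) (p : Em m) : Submodule ℂ (Em m) :=
  ⨅ f ∈ {f : MvPolynomial (Fin m) ℂ | ∀ x ∈ X, pev f x = 0},
    LinearMap.ker ((fderiv ℂ (pev f) p : Em m →L[ℂ] ℂ) : Em m →ₗ[ℂ] ℂ)

/-- The singular locus of a pure `k`-dimensional algebraic set `X`: the points of `X`
where the Zariski tangent space does not have dimension `k`. -/
def singLocus {m : ℕ} (X : Set (Em m)) (k : ℕ) : Set (Em m) :=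
  {p ∈ X | Module.finrank ℂ (zTangent X p) ≠ k}

/-- The Whitney tangent cone at infinity `C_{3,∞}(X)`. -/
def C3Inf {m : ℕ} (X : Set (Em m)) : Set (Em m) :=
  {v | ∃ (p : ℕ → Em m) (t : ℕ → ℂ), (∀ j, p j ∈ X) ∧
    Tendsto (fun j => ‖p j‖) atTop atTop ∧ Tendsto (fun j => t j • p j) atTop (𝓝 v)}

/-- The Whitney tangent cone at infinity `C_{4,∞}(X)` (for `X` pure `k`-dimensional). -/
def C4Inf {m : ℕ} (X : Set (Em m)) (k : ℕ) : Set (Em m) :=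
  {v | ∃ (p w : ℕ → Em m), (∀ j, p j ∈ X \ singLocus X k) ∧
    (∀ j, w j ∈ zTangent X (p j)) ∧
    Tendsto (fun j => ‖p j‖) atTop atTop ∧ Tendsto w atTop (𝓝 v)}

/-- The Whitney tangent cone at infinity `C_{5,∞}(X)`. -/
def C5Inf {m : ℕ} (X : Set (Em m)) : Set (Em m) :=
  {v | ∃ (p q : ℕ → Em m) (t : ℕ → ℂ), (∀ j, p j ∈ X) ∧ (∀ j, q j ∈ X) ∧
    Tendsto (fun j => ‖p j‖) atTop atTop ∧ Tendsto (fun j => ‖q j‖) atTop atTop ∧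
    Tendsto (fun j => t j • (p j - q j)) atTop (𝓝 v)}

/-! `πᵢ` is linear with kernel `Wⁱ`. If it failed to be injective outside every ball, there
would be pairs `p ≠ q` of points of `X` escaping to infinity with `p - q ∈ Wⁱ`; by compactness
of the unit sphere the normalised differences `(p - q)/‖p - q‖` accumulate at a unit vector,
which lies in `C_{5,∞}(X) ∩ Wⁱ = {0}`. -/

section ConeAtInfinity

variable {m : ℕ} {X : Set (Em m)}

theorem exists_ne_zero_mem_C5Inf_inter (K : Submodule ℂ (Em m)) {p q : ℕ → Em m}
    (hpX : ∀ j, p j ∈ X) (hqX : ∀ j, q j ∈ X)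
    (hp : Tendsto (fun j => ‖p j‖) atTop atTop) (hq : Tendsto (fun j => ‖q j‖) atTop atTop)
    (hne : ∀ j, p j ≠ q j) (hK : ∀ j, p j - q j ∈ K) :
    ∃ v ∈ C5Inf X ∩ K, v ≠ 0 := by
  set t : ℕ → ℂ := fun j => ((‖p j - q j‖⁻¹ : ℝ) : ℂ)
  have hu_sphere : ∀ j, t j • (p j - q j) ∈ sphere (0 : Em m) 1 := fun j => by
    have : ‖p j - q j‖ ≠ 0 := norm_ne_zero_iff.mpr (sub_ne_zero.mpr (hne j))
    simp [t, norm_smul, inv_mul_cancel₀ this]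
  obtain ⟨v, hv, φ, hφ, hconv⟩ := (isCompact_sphere (0 : Em m) 1).tendsto_subseq hu_sphere
  have hvC5 : v ∈ C5Inf X :=
    ⟨p ∘ φ, q ∘ φ, t ∘ φ, fun j => hpX (φ j), fun j => hqX (φ j),
      hp.comp hφ.tendsto_atTop, hq.comp hφ.tendsto_atTop, hconv⟩
  have hvK : v ∈ K :=
    K.closed_of_finiteDimensional.mem_of_tendsto hconv
      (Eventually.of_forall fun j => K.smul_mem _ (hK (φ j)))
  exact ⟨v, ⟨hvC5, hvK⟩, ne_zero_of_mem_unit_sphere ⟨v, hv⟩⟩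

theorem injOn_compl_closedBall_of_C5Inf_inter_ker {F : Type*} [AddCommGroup F] [Module ℂ F]
    (f : Em m →ₗ[ℂ] F) (hf : C5Inf X ∩ LinearMap.ker f = {0}) :
    ∃ R : ℝ, 0 < R ∧ Set.InjOn f (X \ closedBall 0 R) := by
  by_contra! hcon
  have hpair : ∀ j : ℕ, ∃ pq : Em m × Em m, pq.1 ∈ X ∧ pq.2 ∈ X ∧
      (j : ℝ) < ‖pq.1‖ ∧ (j : ℝ) < ‖pq.2‖ ∧ f pq.1 = f pq.2 ∧ pq.1 ≠ pq.2 := fun j => by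
    have h := hcon (j + 1) (by positivity)
    simp only [Set.InjOn, not_forall, exists_prop] at h
    obtain ⟨p, ⟨hpX, hp⟩, q, ⟨hqX, hq⟩, hfpq, hne⟩ := h
    simp only [mem_closedBall, dist_zero_right, not_le] at hp hq
    exact ⟨(p, q), hpX, hqX, by linarith, by linarith, hfpq, hne⟩
  choose pq hpX hqX hp hq hfpq hne using hpair
  have escapes : ∀ {r : ℕ → Em m}, (∀ j : ℕ, (j : ℝ) < ‖r j‖) →
      Tendsto (fun j => ‖r j‖) atTop atTop := fun hr =>
    tendsto_atTop_mono (fun j => (hr j).le) tendsto_natCast_atTop_atTop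
  obtain ⟨v, hv, hv0⟩ := exists_ne_zero_mem_C5Inf_inter (LinearMap.ker f) hpX hqX
    (escapes hp) (escapes hq) hne (fun j => by simp [LinearMap.mem_ker, hfpq j])
  exact hv0 (by rwa [hf] at hv)

end ConeAtInfinity

section Projection

variable {m k : ℕ} (W : Submodule ℂ (Em m)) (e₁ : Wᗮ ≃ₗᵢ[ℂ] EuclideanSpace ℂ (Fin k))
  (e₂ : W ≃ₗᵢ[ℂ] EuclideanSpace ℂ (Fin (m - k))) (i : Fin (m - k))

/-- The projection `πᵢ(x, y) = (x, yᵢ)`, as a linear map. -/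
def snocProj : Em m →ₗ[ℂ] Em (k + 1) where
  toFun z := WithLp.toLp 2 (Fin.snoc (α := fun _ => ℂ)
    (WithLp.ofLp (e₁ ((Wᗮ).orthogonalProjectionOnto z))) (e₂ (W.orthogonalProjectionOnto z) i))
  map_add' x y := by
    ext l
    refine Fin.lastCases ?_ (fun l => ?_) l <;> simp
  map_smul' c x := by
    ext l
    refine Fin.lastCases ?_ (fun l => ?_) l <;> simp

theorem mem_ker_snocProj_iff {z : Em m} :
    z ∈ LinearMap.ker (snocProj W e₁ e₂ i) ↔ z ∈ W ∧ e₂ (W.orthogonalProjectionOnto z) i = 0 := by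
  have hV : (Wᗮ).orthogonalProjectionOnto z = 0 ↔ z ∈ W := by
    rw [Submodule.orthogonalProjectionOnto_eq_zero_iff, Submodule.orthogonal_orthogonal]
  have hzero : (0 : Fin (k + 1) → ℂ) = Fin.snoc (α := fun _ => ℂ) 0 0 := by
    ext l
    refine Fin.lastCases ?_ (fun l => ?_) l <;> simp
  rw [LinearMap.mem_ker, ← WithLp.ofLp_eq_zero]
  simp only [snocProj, LinearMap.coe_mk, AddHom.coe_mk, hzero, Fin.snoc_inj,
    WithLp.ofLp_eq_zero, LinearIsometryEquiv.map_eq_zero_iff, hV]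

end Projection

theorem proj_i_injective_outside_ball_general {m k : ℕ} (X : Set (Em m))
    (W : Submodule ℂ (Em m))
    (e₁ : Wᗮ ≃ₗᵢ[ℂ] EuclideanSpace ℂ (Fin k))
    (e₂ : W ≃ₗᵢ[ℂ] EuclideanSpace ℂ (Fin (m - k)))
    (i : Fin (m - k))
    (πi : Em m → Em (k + 1))
    (hπi : πi = fun z => (WithLp.toLp 2 (Fin.snoc (α := fun _ => ℂ) (WithLp.ofLp (e₁ ((Wᗮ).orthogonalProjectionOnto z)))
      (e₂ (W.orthogonalProjectionOnto z) i)) : Em (k + 1)))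
    (Wi : Set (Em m))
    (hWidef : Wi = {z : Em m | z ∈ W ∧ e₂ (W.orthogonalProjectionOnto z) i = 0})
    (hC5Wi : C5Inf X ∩ Wi = {0}) :
    ∃ R : ℝ, 0 < R ∧ Set.InjOn πi (X \ Metric.closedBall 0 R) := by
  have hker : (LinearMap.ker (snocProj W e₁ e₂ i) : Set (Em m)) = Wi := by
    ext z
    simp only [SetLike.mem_coe, mem_ker_snocProj_iff, hWidef, Set.mem_ofPred_eq]
  subst hπi
  exact injOn_compl_closedBall_of_C5Inf_inter_ker (snocProj W e₁ e₂ i) (hker ▸ hC5Wi)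

/-- Let `X ⊆ ℂ^m` be an unbounded pure `k`-dimensional complex algebraic
set, `W` an `(m-k)`-dimensional complex subspace with `W ∩ C_{3,∞}(X) = {0}`, with
`V = Wᗮ`; fix orthogonal coordinates `e₁ : V ≃ ℂ^k`, `e₂ : W ≃ ℂ^{m-k}`, let
`Wⁱ = {(0, y) : yᵢ = 0}` and `πᵢ(x, y) = (x, yᵢ) : ℂ^m → ℂ^{k+1}`.
If `C_{5,∞}(X) ∩ Wⁱ = {0}`, then there is `R > 0` such that `πᵢ` is injective on
`X \ B̄_R`. -/
theorem proj_i_injective_outside_ball {m k : ℕ} (X : Set (Em m))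
    (hX : IsAlgSet X) (hpure : IsPureDim X k) (hub : ¬ Bornology.IsBounded X)
    (W : Submodule ℂ (Em m)) (hW : Module.finrank ℂ W = m - k)
    (htrans : (W : Set (Em m)) ∩ C3Inf X = {0})
    (e₁ : Wᗮ ≃ₗᵢ[ℂ] EuclideanSpace ℂ (Fin k))
    (e₂ : W ≃ₗᵢ[ℂ] EuclideanSpace ℂ (Fin (m - k)))
    (i : Fin (m - k))
    (πi : Em m → Em (k + 1))
    (hπi : πi = fun z => (WithLp.toLp 2 (Fin.snoc (α := fun _ => ℂ) (WithLp.ofLp (e₁ ((Wᗮ).orthogonalProjectionOnto z)))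
      (e₂ (W.orthogonalProjectionOnto z) i)) : Em (k + 1)))
    (Wi : Set (Em m))
    (hWidef : Wi = {z : Em m | z ∈ W ∧ e₂ (W.orthogonalProjectionOnto z) i = 0})
    (hC5Wi : C5Inf X ∩ Wi = {0}) :
    ∃ R : ℝ, 0 < R ∧ Set.InjOn πi (X \ Metric.closedBall 0 R) :=
  proj_i_injective_outside_ball_general X W e₁ e₂ i πi hπi Wi hWidef hC5Wi

end
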